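/- arXiv:1301.1038 — 6 statements merged into one kernel-verified Lean document; each statement's English description precedes it below -/
import Mathlib

section
/- Let 𝔄 be a unital WOT-closed subalgebra of B(H), let V_1,…,V_k ∈ 𝔄 be isometries with pairwise orthogonal ranges (V_i*V_j = δ_{i,j}I), and let 𝔍 be the WOT-closed right ideal of 𝔄 generated by V_1,…,V_k, i.e. the WOT-closure of V_1𝔄 + ⋯ + V_k𝔄. Then every A ∈ 𝔍 can be written uniquely in the form A = Σ_{i=1}^k V_iA_i with A_1,…,A_k ∈ 𝔄. -/
noncomputable section

open scoped InnerProductSpace ComplexInnerProductSpace Classical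

section GeneralDefs

variable {E : Type*} [NormedAddCommGroup E] [InnerProductSpace ℂ E]

/-- The operator associated to a word: `wordOp V [a₁, …, a_r] = V a₁ * ⋯ * V a_r`. -/
def wordOp {ι : Type*} (V : ι → E →L[ℂ] E) (w : List ι) : E →L[ℂ] E :=
  (w.map V).prod

/-- The operator associated to a word of fixed length `k` given as a function `Fin k → ι`. -/
def fnWordOp {ι : Type*} {k : ℕ} (V : ι → E →L[ℂ] E) (u : Fin k → ι) : E →L[ℂ] E :=
  wordOp V (List.ofFn u)

/-- The closure of a set of operators in the weak operator topology, described via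
basic WOT-neighbourhoods (finitely many vector functionals). -/
def wotClosure (S : Set (E →L[ℂ] E)) : Set (E →L[ℂ] E) :=
  {A | ∀ ε > (0 : ℝ), ∀ F : Finset (E × E), ∃ B ∈ S, ∀ p ∈ F, ‖⟪p.1, (A - B) p.2⟫‖ < ε}

/-- The unital WOT-closed algebra generated by a set of operators. -/
def genWotAlg (G : Set (E →L[ℂ] E)) : Set (E →L[ℂ] E) :=
  wotClosure ((Algebra.adjoin ℂ G : Subalgebra ℂ (E →L[ℂ] E)) : Set (E →L[ℂ] E))

/-- A wandering vector for a row-isometry `V = [V_a : a ∈ ι]`: a unit vector whose orbit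
under all words in the `V_a` is an orthonormal family. -/
def IsWandering {ι : Type*} (V : ι → E →L[ℂ] E) (ζ : E) : Prop :=
  ‖ζ‖ = 1 ∧ ∀ w w' : List ι,
    ⟪wordOp V w ζ, wordOp V w' ζ⟫ = if w = w' then 1 else 0

/-- Restriction of an operator to an invariant subspace (junk value `0` if not invariant). -/
def restrictCLM (A : E →L[ℂ] E) (M : Submodule ℂ E) : M →L[ℂ] M :=
  if h : ∀ x ∈ M, A x ∈ M then
    { toFun := fun x => ⟨A x, h x x.2⟩
      map_add' := by intro x y; ext; simp
      map_smul' := by intro c x; ext; simp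
      cont := Continuous.subtype_mk (A.continuous.comp continuous_subtype_val) _ }
  else 0

/-- The unital WOT-closed algebra on `M` generated by the restrictions of the `V a` to `M`. -/
def rowAlgOn {ι : Type*} (V : ι → E →L[ℂ] E) (M : Submodule ℂ E) : Set (M →L[ℂ] M) :=
  genWotAlg (Set.range fun a => restrictCLM (V a) M)

/-- The unital WOT-closed algebra on `M` generated by the restrictions of the `V a`
is self-adjoint. -/
def restrictedAlgSelfAdjoint {ι : Type*} (V : ι → E →L[ℂ] E) (M : Submodule ℂ E) : Prop :=
  ∀ A ∈ rowAlgOn V M, ∃ B ∈ rowAlgOn V M,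
    ∀ x y : M, ⟪((A x : M) : E), (y : E)⟫ = ⟪(x : E), ((B y : M) : E)⟫

variable [CompleteSpace E]

/-- A row-isometry is of dilation type if it is defect free and has no nonzero reducing
subspace on which it is either absolutely continuous (spanned by wandering vectors) or
singular (generating a self-adjoint WOT-closed algebra). -/
def IsDilationType {ι : Type*} [Fintype ι] (V : ι → E →L[ℂ] E) : Prop :=
  (∑ a, V a * star (V a)) = 1 ∧
    ¬ ∃ M : Submodule ℂ E, M ≠ ⊥ ∧ IsClosed (M : Set E) ∧
      (∀ a, ∀ x ∈ M, V a x ∈ M) ∧ (∀ a, ∀ x ∈ M, star (V a) x ∈ M) ∧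
      ((M = (Submodule.span ℂ {ζ : E | ζ ∈ M ∧ IsWandering V ζ}).topologicalClosure) ∨
        restrictedAlgSelfAdjoint V M)

end GeneralDefs

/-- An isometric representation of the single-vertex 2-graph `F_θ⁺` on a Hilbert space `H`. -/
structure TwoGraphRep (m n : ℕ) (θ : Equiv.Perm (Fin m × Fin n)) (H : Type*)
    [NormedAddCommGroup H] [InnerProductSpace ℂ H] [CompleteSpace H] where
  S : Fin m → H →L[ℂ] H
  T : Fin n → H →L[ℂ] H
  isometS : ∀ i i', star (S i) * S i' = if i = i' then 1 else 0
  isometT : ∀ j j', star (T j) * T j' = if j = j' then 1 else 0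
  comm : ∀ i j, S i * T j = T (θ (i, j)).2 * S (θ (i, j)).1

namespace TwoGraphRep

variable {m n : ℕ} {θ : Equiv.Perm (Fin m × Fin n)} {H : Type*}
  [NormedAddCommGroup H] [InnerProductSpace ℂ H] [CompleteSpace H]

/-- A representation is of Cuntz type if both row-isometries are defect free. -/
def CuntzType (ρ : TwoGraphRep m n θ H) : Prop :=
  (∑ i, ρ.S i * star (ρ.S i)) = 1 ∧ (∑ j, ρ.T j * star (ρ.T j)) = 1

/-- The nonself-adjoint 2-graph algebra `𝔖`: the unital WOT-closed algebra generated by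
the `S_i` and `T_j`. -/
def alg (ρ : TwoGraphRep m n θ H) : Set (H →L[ℂ] H) :=
  genWotAlg (Set.range ρ.S ∪ Set.range ρ.T)

/-- The von Neumann algebra generated by the `S_i` and `T_j`: the WOT-closure of the
unital *-algebra they generate. -/
def vnAlg (ρ : TwoGraphRep m n θ H) : Set (H →L[ℂ] H) :=
  genWotAlg ((Set.range ρ.S ∪ Set.range ρ.T) ∪ star '' (Set.range ρ.S ∪ Set.range ρ.T))

/-- Wandering vector for the row-isometry `[S_u T_v : |u| = k, |v| = l]`. -/
def IsWanderingKL (ρ : TwoGraphRep m n θ H) (k l : ℕ) (ζ : H) : Prop :=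
  ‖ζ‖ = 1 ∧ ∀ (p p' : ℕ) (u u' : List (Fin m)) (v v' : List (Fin n)),
    u.length = p * k → v.length = p * l → u'.length = p' * k → v'.length = p' * l →
    ⟪(wordOp ρ.S u * wordOp ρ.T v) ζ, (wordOp ρ.S u' * wordOp ρ.T v') ζ⟫ =
      if u = u' ∧ v = v' then 1 else 0

/-- The range of the structure projection `P_{k,l}`: the orthogonal complement of the
closed linear span of the wandering vectors of `[S_u T_v : |u| = k, |v| = l]`. -/
def structSpaceKL (ρ : TwoGraphRep m n θ H) (k l : ℕ) : Submodule ℂ H :=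
  ((Submodule.span ℂ {ζ : H | ρ.IsWanderingKL k l ζ}).topologicalClosure)ᗮ

/-- The range of the first structure projection `P = ⋀_{k,l>0} P_{k,l}`. -/
def firstStructSpace (ρ : TwoGraphRep m n θ H) : Submodule ℂ H :=
  ⨅ (k : ℕ) (l : ℕ) (_ : 0 < k) (_ : 0 < l), ρ.structSpaceKL k l

/-- The row-isometry `[S_u T_v : |u| = k, |v| = l]`. -/
def rowKL (ρ : TwoGraphRep m n θ H) (k l : ℕ) :
    ((Fin k → Fin m) × (Fin l → Fin n)) → H →L[ℂ] H :=
  fun p => fnWordOp ρ.S p.1 * fnWordOp ρ.T p.2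

/-- A wandering vector for the representation `(S,T)`. -/
def IsWanderingRep (ρ : TwoGraphRep m n θ H) (ζ : H) : Prop :=
  ‖ζ‖ = 1 ∧ ∀ (u u' : List (Fin m)) (v v' : List (Fin n)),
    ⟪(wordOp ρ.S u * wordOp ρ.T v) ζ, (wordOp ρ.S u' * wordOp ρ.T v') ζ⟫ =
      if u = u' ∧ v = v' then 1 else 0

/-- The representation is irreducible: the only closed subspaces invariant under all
`S_i, T_j, S_i*, T_j*` are `⊥` and `⊤`. -/
def Irreducible (ρ : TwoGraphRep m n θ H) : Prop :=
  ∀ M : Submodule ℂ H, IsClosed (M : Set H) →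
    (∀ i, ∀ x ∈ M, ρ.S i x ∈ M) → (∀ i, ∀ x ∈ M, star (ρ.S i) x ∈ M) →
    (∀ j, ∀ x ∈ M, ρ.T j x ∈ M) → (∀ j, ∀ x ∈ M, star (ρ.T j) x ∈ M) →
    M = ⊥ ∨ M = ⊤

/-- The representation is atomic with standard basis `ξ`: every generator maps each basis
vector to a unimodular multiple of a basis vector. -/
def AtomicBasis {Λ : Type*} (ρ : TwoGraphRep m n θ H) (ξ : HilbertBasis Λ ℂ H) : Prop :=
  (∀ i t, ∃ (c : ℂ) (t' : Λ), ‖c‖ = 1 ∧ ρ.S i (ξ t) = c • ξ t') ∧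
  (∀ j t, ∃ (c : ℂ) (t' : Λ), ‖c‖ = 1 ∧ ρ.T j (ξ t) = c • ξ t')

/-- `x` has a blue ring: `S_u x ∈ 𝕋x` for some nonempty word `u`. -/
def HasBlueRing (ρ : TwoGraphRep m n θ H) (x : H) : Prop :=
  ∃ u : List (Fin m), u ≠ [] ∧ ∃ c : ℂ, ‖c‖ = 1 ∧ wordOp ρ.S u x = c • x

/-- `x` has a red ring: `T_v x ∈ 𝕋x` for some nonempty word `v`. -/
def HasRedRing (ρ : TwoGraphRep m n θ H) (x : H) : Prop :=
  ∃ v : List (Fin n), v ≠ [] ∧ ∃ c : ℂ, ‖c‖ = 1 ∧ wordOp ρ.T v x = c • x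

/-- `x` has a mixed ring: `T_v S_u x ∈ 𝕋x` for some nonempty words `u`, `v`. -/
def HasMixedRing (ρ : TwoGraphRep m n θ H) (x : H) : Prop :=
  ∃ (u : List (Fin m)) (v : List (Fin n)), u ≠ [] ∧ v ≠ [] ∧
    ∃ c : ℂ, ‖c‖ = 1 ∧ wordOp ρ.T v (wordOp ρ.S u x) = c • x

end TwoGraphRep

/-!
Left multiplication by a fixed operator is WOT-continuous. Applying `V_i*` to the generators
`∑ V_j C_j` of the ideal returns `C_i`, so `V_i* A` lies in the WOT-closure of `𝔄`, which is `𝔄`;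
applying `1 - ∑ V_i V_i*` kills every generator, so it kills `A`, i.e. `A = ∑ V_i (V_i* A)`.
Uniqueness is again the identity `V_i* ∑ V_j B_j = B_i`.
-/

section Biorthogonal

variable {R ι : Type*} [Semiring R] [Fintype ι] [DecidableEq ι] {V W : ι → R}

theorem mul_sum_mul_of_biorthogonal (h : ∀ i j, W i * V j = if i = j then 1 else 0)
    (C : ι → R) (i : ι) : W i * ∑ j, V j * C j = C i := by
  simp only [Finset.mul_sum, ← mul_assoc, h, ite_mul, one_mul, zero_mul,
    Finset.sum_ite_eq, Finset.mem_univ, if_true]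

theorem sum_mul_mul_sum_mul_of_biorthogonal (h : ∀ i j, W i * V j = if i = j then 1 else 0)
    (C : ι → R) : (∑ i, V i * W i) * ∑ j, V j * C j = ∑ j, V j * C j := by
  simp only [Finset.sum_mul, mul_assoc, mul_sum_mul_of_biorthogonal h]

end Biorthogonal

section WotClosure

variable {E : Type*} [NormedAddCommGroup E] [InnerProductSpace ℂ E]

theorem wotClosure_mono {S T : Set (E →L[ℂ] E)} (hST : S ⊆ T) :
    wotClosure S ⊆ wotClosure T := by
  intro A hA ε hε F
  obtain ⟨B, hB, hAB⟩ := hA ε hε F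
  exact ⟨B, hST hB, hAB⟩

theorem eq_of_mem_wotClosure_singleton {A B : E →L[ℂ] E} (hA : A ∈ wotClosure {B}) :
    A = B := by
  have h : ∀ x y, ⟪x, (A - B) y⟫ = 0 := fun x y => by
    refine norm_eq_zero.mp (le_antisymm (le_of_forall_pos_le_add fun ε hε => ?_) (norm_nonneg _))
    obtain ⟨_, rfl, hAB⟩ := hA ε hε {(x, y)}
    rw [zero_add]
    exact (hAB (x, y) (Finset.mem_singleton_self _)).le
  exact sub_eq_zero.mp <| ContinuousLinearMap.ext fun y =>
    ext_inner_left ℂ fun x => by rw [h, zero_apply, inner_zero_right]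

theorem mul_mem_wotClosure_image [CompleteSpace E] (T : E →L[ℂ] E) {S : Set (E →L[ℂ] E)}
    {A : E →L[ℂ] E} (hA : A ∈ wotClosure S) : T * A ∈ wotClosure ((T * ·) '' S) := by
  intro ε hε F
  obtain ⟨B, hB, hAB⟩ := hA ε hε (F.image fun p => (ContinuousLinearMap.adjoint T p.1, p.2))
  refine ⟨T * B, Set.mem_image_of_mem _ hB, fun p hp => ?_⟩
  rw [← mul_sub, mul_apply_eq_comp, ← ContinuousLinearMap.adjoint_inner_left]
  exact hAB _ (Finset.mem_image_of_mem _ hp)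

end WotClosure

theorem statement13_general {H : Type*} [NormedAddCommGroup H] [InnerProductSpace ℂ H]
    [CompleteSpace H] (𝔄 : Subalgebra ℂ (H →L[ℂ] H))
    (hclosed : wotClosure (𝔄 : Set (H →L[ℂ] H)) = (𝔄 : Set (H →L[ℂ] H)))
    (k : ℕ) (V : Fin k → H →L[ℂ] H)
    (hiso : ∀ i j, star (V i) * V j = if i = j then 1 else 0) :
    ∀ A ∈ wotClosure {X : H →L[ℂ] H |
        ∃ C : Fin k → H →L[ℂ] H, (∀ i, C i ∈ 𝔄) ∧ X = ∑ i, V i * C i},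
      ∃! B : Fin k → H →L[ℂ] H, (∀ i, B i ∈ 𝔄) ∧ A = ∑ i, V i * B i := by
  intro A hA
  have hmem : ∀ i, star (V i) * A ∈ 𝔄 := fun i => by
    rw [← SetLike.mem_coe, ← hclosed]
    refine wotClosure_mono ?_ (mul_mem_wotClosure_image (star (V i)) hA)
    rintro _ ⟨_, ⟨C, hC, rfl⟩, rfl⟩
    simpa only [mul_sum_mul_of_biorthogonal hiso] using SetLike.mem_coe.mpr (hC i)
  have hdecomp : A = ∑ i, V i * (star (V i) * A) := by
    have hkill : (1 - ∑ i, V i * star (V i)) * A = 0 := by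
      refine eq_of_mem_wotClosure_singleton
        (wotClosure_mono ?_ (mul_mem_wotClosure_image (1 - ∑ i, V i * star (V i)) hA))
      rintro _ ⟨_, ⟨C, -, rfl⟩, rfl⟩
      simp only [Set.mem_singleton_iff, sub_mul, one_mul,
        sum_mul_mul_sum_mul_of_biorthogonal hiso, sub_self]
    simpa only [sub_mul, one_mul, sub_eq_zero, Finset.sum_mul, mul_assoc] using hkill
  refine ⟨fun i => star (V i) * A, ⟨hmem, hdecomp⟩, ?_⟩
  rintro B ⟨-, rfl⟩
  funext i
  exact (mul_sum_mul_of_biorthogonal hiso B i).symm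

/-- Unique decomposition in a WOT-closed right ideal generated by isometries with pairwise
orthogonal ranges. -/
theorem statement13 {H : Type*} [NormedAddCommGroup H] [InnerProductSpace ℂ H]
    [CompleteSpace H] (𝔄 : Subalgebra ℂ (H →L[ℂ] H))
    (hclosed : wotClosure (𝔄 : Set (H →L[ℂ] H)) = (𝔄 : Set (H →L[ℂ] H)))
    (k : ℕ) (V : Fin k → H →L[ℂ] H) (hV : ∀ i, V i ∈ 𝔄)
    (hiso : ∀ i j, star (V i) * V j = if i = j then 1 else 0) :
    ∀ A ∈ wotClosure {X : H →L[ℂ] H |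
        ∃ C : Fin k → H →L[ℂ] H, (∀ i, C i ∈ 𝔄) ∧ X = ∑ i, V i * C i},
      ∃! B : Fin k → H →L[ℂ] H, (∀ i, B i ∈ 𝔄) ∧ A = ∑ i, V i * B i :=
  statement13_general 𝔄 hclosed k V hiso
end
end

section
/- Let S_1,…,S_m and T_1,…,T_n be isometries on a complex Hilbert space H such that S_i*S_{i'} = δ_{i,i'}I, T_j*T_{j'} = δ_{j,j'}I, Σ_{i=1}^m S_iS_i* = I = Σ_{j=1}^n T_jT_j*, and S_iT_j = T_jS_i for all i, j (i.e. (S,T) is a Cuntz-type representation of the 2-graph F_id^+ for the identity permutation). Then S_i*T_j = T_jS_i* for all i, j. -/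
noncomputable section

open scoped InnerProductSpace ComplexInnerProductSpace Classical

theorem Commute.of_cuntz_family {R ι : Type*} [Semiring R] [Fintype ι] [DecidableEq ι]
    (s s' : ι → R) (hs : ∀ i k, s' i * s k = if i = k then 1 else 0)
    (hsum : ∑ k, s k * s' k = 1) {t : R} (ht : ∀ k, Commute (s k) t) (i : ι) :
    Commute (s' i) t :=
  calc s' i * t = ∑ k, s' i * t * (s k * s' k) := by rw [← Finset.mul_sum, hsum, mul_one]
    _ = ∑ k, s' i * s k * (t * s' k) := by
      refine Finset.sum_congr rfl fun k _ => ?_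
      rw [mul_assoc, ← mul_assoc t, ← (ht k).eq, mul_assoc, mul_assoc]
    _ = t * s' i := by simp [hs]

theorem statement15_general {m n : ℕ} {H : Type*}
    [NormedAddCommGroup H] [InnerProductSpace ℂ H] [CompleteSpace H]
    (S : Fin m → H →L[ℂ] H) (T : Fin n → H →L[ℂ] H)
    (hS : ∀ i i', star (S i) * S i' = if i = i' then 1 else 0)
    (hScuntz : (∑ i, S i * star (S i)) = 1)
    (hcomm : ∀ i j, S i * T j = T j * S i) :
    ∀ i j, star (S i) * T j = T j * star (S i) :=
  fun i j => Commute.of_cuntz_family S (fun i => star (S i)) hS hScuntz (fun k => hcomm k j) i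

/-- For a Cuntz-type representation of `F_id⁺`, `S_i* T_j = T_j S_i*` for all `i, j`. -/
theorem statement15 {m n : ℕ} (hm : 0 < m) (hn : 0 < n) {H : Type*}
    [NormedAddCommGroup H] [InnerProductSpace ℂ H] [CompleteSpace H]
    (S : Fin m → H →L[ℂ] H) (T : Fin n → H →L[ℂ] H)
    (hS : ∀ i i', star (S i) * S i' = if i = i' then 1 else 0)
    (hT : ∀ j j', star (T j) * T j' = if j = j' then 1 else 0)
    (hScuntz : (∑ i, S i * star (S i)) = 1) (hTcuntz : (∑ j, T j * star (T j)) = 1)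
    (hcomm : ∀ i j, S i * T j = T j * S i) :
    ∀ i j, star (S i) * T j = T j * star (S i) :=
  statement15_general S T hS hScuntz hcomm
end
end

section
/- Let n ≥ 2, let H_n = ℓ²(F_n^+) with orthonormal basis {ξ_w : w ∈ F_n^+}, and let L_i, R_i (1 ≤ i ≤ n) be the isometries on H_n determined by L_iξ_w = ξ_{iw} and R_iξ_w = ξ_{wi}. Then the commuting pair (L,R) has no Cuntz-type extension: there do not exist a complex Hilbert space K, a linear isometry ι : H_n → K, and isometries S_1,…,S_n, T_1,…,T_n on K satisfying S_i*S_{i'} = δ_{i,i'}I, T_j*T_{j'} = δ_{j,j'}I, Σ_{i=1}^n S_iS_i* = I = Σ_{j=1}^n T_jT_j*, S_iT_j = T_jS_i for all i, j, and S_i ∘ ι = ι ∘ L_i, T_j ∘ ι = ι ∘ R_j for all i, j. -/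
noncomputable section

open scoped InnerProductSpace ComplexInnerProductSpace Classical

/-!
Let `η = ι ξ_∅`, so that `S_i η = T_i η = ι ξ_i`. Because the `S_k` form a Cuntz family
commuting with `T_j`, the adjoints `S_i⋆` also commute with `T_j`, hence `S_i` commutes
with `T_i⋆`. Then `S_i T_i⋆ η = T_i⋆ S_i η = T_i⋆ T_i η = η`, so every `T_i⋆ η` is a unit
vector, and the Cuntz relation for the `T_j` gives `1 = ‖η‖² = ∑_j ‖T_j⋆ η‖² = n`.
-/

theorem Commute.star_left_of_sum_mul_star_eq_one {R ι : Type*} [Semiring R] [Star R]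
    [Fintype ι] [DecidableEq ι] {S : ι → R} {T : R}
    (hiso : ∀ i j, star (S i) * S j = if i = j then 1 else 0)
    (hsum : ∑ k, S k * star (S k) = 1) (hT : ∀ k, Commute (S k) T) (i : ι) :
    Commute (star (S i)) T :=
  calc star (S i) * T = ∑ k, star (S i) * T * (S k * star (S k)) := by
        rw [← Finset.mul_sum, hsum, mul_one]
    _ = ∑ k, star (S i) * S k * (T * star (S k)) := by
        refine Finset.sum_congr rfl fun k _ => ?_
        rw [mul_assoc, ← mul_assoc T, ← (hT k).eq]
        simp only [mul_assoc]
    _ = T * star (S i) := by simp [hiso, ite_mul]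

namespace ContinuousLinearMap

variable {𝕜 E : Type*} [RCLike 𝕜] [NormedAddCommGroup E] [InnerProductSpace 𝕜 E]
  [CompleteSpace E]

theorem norm_sq_eq_sum_norm_sq_star_apply {ι : Type*} [Fintype ι] {T : ι → E →L[𝕜] E}
    (hsum : ∑ j, T j * star (T j) = 1) (x : E) :
    ‖x‖ ^ 2 = ∑ j, ‖star (T j) x‖ ^ 2 := by
  have hx : x = ∑ j, T j (star (T j) x) := by
    simpa using (congrArg (· x) hsum).symm
  calc ‖x‖ ^ 2 = RCLike.re (inner 𝕜 x x) := (inner_self_eq_norm_sq x).symm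
    _ = ∑ j, RCLike.re (inner 𝕜 (star (T j) x) (star (T j) x)) := by
        nth_rewrite 2 [hx]
        simp only [inner_sum, star_eq_adjoint, ← adjoint_inner_left, map_sum]
    _ = ∑ j, ‖star (T j) x‖ ^ 2 := by simp only [inner_self_eq_norm_sq]

theorem norm_star_apply_eq_of_commute {S T : E →L[𝕜] E} (hS : star S * S = 1)
    (hT : star T * T = 1) (hST : Commute S (star T)) {η : E} (hη : S η = T η) :
    ‖star T η‖ = ‖η‖ := by
  have hback : S (star T η) = η := by
    rw [← mul_apply_eq_comp, hST.eq, mul_apply_eq_comp, hη, ← mul_apply_eq_comp, hT,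
      one_apply_eq_self]
  rw [← (norm_map_iff_adjoint_comp_self S).mpr hS, hback]

end ContinuousLinearMap

theorem statement16_general (n : ℕ) (hn : 2 ≤ n) {Hn : Type*}
    [NormedAddCommGroup Hn] [InnerProductSpace ℂ Hn]
    (ξ : HilbertBasis (List (Fin n)) ℂ Hn)
    (L R : Fin n → Hn →L[ℂ] Hn)
    (hL : ∀ i w, L i (ξ w) = ξ (i :: w))
    (hR : ∀ i w, R i (ξ w) = ξ (w ++ [i])) :
    ∀ (K : Type*) [NormedAddCommGroup K] [InnerProductSpace ℂ K] [CompleteSpace K],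
    ∀ (ι : Hn →L[ℂ] K) (S T : Fin n → K →L[ℂ] K),
      (∀ x, ‖ι x‖ = ‖x‖) →
      (∀ i j, star (S i) * S j = if i = j then 1 else 0) →
      (∀ i j, star (T i) * T j = if i = j then 1 else 0) →
      ((∑ i, S i * star (S i)) = 1) → ((∑ j, T j * star (T j)) = 1) →
      (∀ i j, S i * T j = T j * S i) →
      (∀ i x, S i (ι x) = ι (L i x)) →
      (∀ j x, T j (ι x) = ι (R j x)) → False := by
  intro K _ _ _ ι S T hι hSiso hTiso hScuntz hTcuntz hcomm hSι hTι
  set η := ι (ξ [])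
  have hη : ‖η‖ = 1 := by rw [hι]; exact ξ.orthonormal.1 []
  have hSη_eq_Tη : ∀ i, S i η = T i η := fun i => by
    rw [hSι, hTι, hL, hR, List.nil_append]
  have hS_comm_starT : ∀ i, Commute (S i) (star (T i)) := fun i => by
    simpa using
      (Commute.star_left_of_sum_mul_star_eq_one hSiso hScuntz (fun k => hcomm k i) i).star_star
  have hnorm : ∀ i, ‖star (T i) η‖ = 1 := fun i => by
    rw [ContinuousLinearMap.norm_star_apply_eq_of_commute (by simpa using hSiso i i)
      (by simpa using hTiso i i) (hS_comm_starT i) (hSη_eq_Tη i), hη]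
  have hn_eq_one : (n : ℝ) = 1 := by
    simpa [hη, hnorm] using (ContinuousLinearMap.norm_sq_eq_sum_norm_sq_star_apply hTcuntz η).symm
  norm_cast at hn_eq_one
  omega

/-- The pair `(L, R)` of left and right regular representations of `F_n⁺` admits no Cuntz-type
extension. -/
theorem statement16 (n : ℕ) (hn : 2 ≤ n) {Hn : Type*}
    [NormedAddCommGroup Hn] [InnerProductSpace ℂ Hn] [CompleteSpace Hn]
    (ξ : HilbertBasis (List (Fin n)) ℂ Hn)
    (L R : Fin n → Hn →L[ℂ] Hn)
    (hL : ∀ i w, L i (ξ w) = ξ (i :: w))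
    (hR : ∀ i w, R i (ξ w) = ξ (w ++ [i])) :
    ∀ (K : Type*) [NormedAddCommGroup K] [InnerProductSpace ℂ K] [CompleteSpace K],
    ∀ (ι : Hn →L[ℂ] K) (S T : Fin n → K →L[ℂ] K),
      (∀ x, ‖ι x‖ = ‖x‖) →
      (∀ i j, star (S i) * S j = if i = j then 1 else 0) →
      (∀ i j, star (T i) * T j = if i = j then 1 else 0) →
      ((∑ i, S i * star (S i)) = 1) → ((∑ j, T j * star (T j)) = 1) →
      (∀ i j, S i * T j = T j * S i) →
      (∀ i x, S i (ι x) = ι (L i x)) →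
      (∀ j x, T j (ι x) = ι (R j x)) → False :=
  statement16_general n hn ξ L R hL hR
end
end

section
/- Let (S,T) be an isometric representation of F_θ^+ on H, let k,l > 0, and let ζ be a wandering vector for the row-isometry [S_uT_v : |u|=k, |v|=l]. Then for every i ∈ {1,…,m} and every j ∈ {1,…,n}, the vectors S_iζ and T_jζ are again wandering vectors for the row-isometry [S_uT_v : |u|=k, |v|=l]. -/
noncomputable section

open scoped InnerProductSpace ComplexInnerProductSpace Classical

/-!
Commuting `S`-words past `T`-words with the 2-graph relation preserves word lengths, so
`S_u T_v S_i ζ = S_{uc} T_e ζ` with `|c| = 1`, `|e| = |v|`, and `S_u T_v T_j ζ = S_u T_{vj} ζ`.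
Both claims therefore reduce to the orthonormality of the vectors `S_a T_b ζ` with
`(|a|, |b|) = (pk + r, pl + s)` for a fixed offset `(r, s)`. For `p < p'`, cancelling `S_a`
against `S_{a'}` leaves a word `S_w` with `|w| = (p' - p)k`; pushing it to the right of `T_{b'}`
and cancelling `T_b` leaves `⟪ζ, S_e T_f ζ⟫` with `|e| = (p' - p)k > 0`, which vanishes since
`ζ` is wandering.
-/

theorem exists_prod_map_mul_prod_map_eq {M α β : Type*} [Monoid M] (f : α → M) (g : β → M)
    (hfg : ∀ a b, ∃ a' b', g b * f a = f a' * g b') (u : List α) (v : List β) :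
    ∃ (u' : List α) (v' : List β), u'.length = u.length ∧ v'.length = v.length ∧
      (v.map g).prod * (u.map f).prod = (u'.map f).prod * (v'.map g).prod := by
  have letter : ∀ (a : α) (v : List β), ∃ (a' : α) (v' : List β), v'.length = v.length ∧
      (v.map g).prod * f a = f a' * (v'.map g).prod := by
    intro a v
    induction v with
    | nil => exact ⟨a, [], rfl, by simp⟩
    | cons b v ih =>
      obtain ⟨a₁, v₁, hlen, heq⟩ := ih
      obtain ⟨a₂, b₂, hab⟩ := hfg a₁ b
      refine ⟨a₂, b₂ :: v₁, by simpa using hlen, ?_⟩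
      simp only [List.map_cons, List.prod_cons, mul_assoc, heq]
      rw [← mul_assoc, hab, mul_assoc]
  induction u generalizing v with
  | nil => exact ⟨[], v, rfl, rfl, by simp⟩
  | cons a u ih =>
    obtain ⟨a₁, v₁, hlen₁, heq₁⟩ := letter a v
    obtain ⟨u₂, v₂, hlen₂, hlen₂', heq₂⟩ := ih v₁
    refine ⟨a₁ :: u₂, v₂, by simpa using hlen₂, hlen₂'.trans hlen₁, ?_⟩
    simp only [List.map_cons, List.prod_cons]
    rw [← mul_assoc, heq₁, mul_assoc, heq₂, mul_assoc]

section RowIsometry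

variable {E : Type*} [NormedAddCommGroup E] [InnerProductSpace ℂ E] {ι : Type*}

@[simp]
theorem wordOp_nil (V : ι → E →L[ℂ] E) : wordOp V [] = 1 := rfl

@[simp]
theorem wordOp_cons (V : ι → E →L[ℂ] E) (a : ι) (w : List ι) :
    wordOp V (a :: w) = V a * wordOp V w := by
  simp [wordOp]

@[simp]
theorem wordOp_append (V : ι → E →L[ℂ] E) (w w' : List ι) :
    wordOp V (w ++ w') = wordOp V w * wordOp V w' := by
  simp [wordOp]

variable [CompleteSpace E]

theorem inner_apply_eq_inner_star_apply (A : E →L[ℂ] E) (x y : E) :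
    ⟪A x, y⟫ = ⟪x, star A y⟫ := by
  rw [ContinuousLinearMap.star_eq_adjoint, ContinuousLinearMap.adjoint_inner_right]

variable [DecidableEq ι] {V : ι → E →L[ℂ] E}

def IsRowIsometry (V : ι → E →L[ℂ] E) : Prop :=
  ∀ i i', star (V i) * V i' = if i = i' then 1 else 0

namespace IsRowIsometry

theorem star_wordOp_mul_self (hV : IsRowIsometry V) (w : List ι) :
    star (wordOp V w) * wordOp V w = 1 := by
  induction w with
  | nil => simp
  | cons a w ih =>
    rw [wordOp_cons, star_mul, mul_assoc, ← mul_assoc (star (V a)), hV, if_pos rfl, one_mul, ih]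

theorem star_wordOp_mul_append (hV : IsRowIsometry V) (w w' : List ι) :
    star (wordOp V w) * wordOp V (w ++ w') = wordOp V w' := by
  rw [wordOp_append, ← mul_assoc, hV.star_wordOp_mul_self, one_mul]

theorem star_wordOp_mul_eq_zero (hV : IsRowIsometry V) {w w' : List ι}
    (hlen : w.length ≤ w'.length) (hw : ¬ w <+: w') : star (wordOp V w) * wordOp V w' = 0 := by
  induction w generalizing w' with
  | nil => exact absurd (List.nil_prefix) hw
  | cons a w ih =>
    obtain _ | ⟨a', w'⟩ := w'
    · simp at hlen
    rw [wordOp_cons, wordOp_cons, star_mul, mul_assoc, ← mul_assoc (star (V a)), hV]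
    by_cases ha : a = a'
    · subst ha
      rw [if_pos rfl, one_mul, ih (by simpa using hlen) (by simpa using hw)]
    · rw [if_neg ha, zero_mul, mul_zero]

theorem star_wordOp_mul_eq_zero_of_length_eq (hV : IsRowIsometry V) {w w' : List ι}
    (hlen : w.length = w'.length) (hw : w ≠ w') : star (wordOp V w) * wordOp V w' = 0 :=
  hV.star_wordOp_mul_eq_zero hlen.le fun h => hw (h.eq_of_length hlen)

theorem norm_wordOp_apply (hV : IsRowIsometry V) (w : List ι) (x : E) :
    ‖wordOp V w x‖ = ‖x‖ := by
  refine (ContinuousLinearMap.norm_map_iff_adjoint_comp_self _).mpr ?_ x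
  rw [← ContinuousLinearMap.star_eq_adjoint]
  exact hV.star_wordOp_mul_self w

theorem norm_apply (hV : IsRowIsometry V) (i : ι) (x : E) : ‖V i x‖ = ‖x‖ := by
  simpa using hV.norm_wordOp_apply [i] x

theorem eq_of_wordOp_apply_eq (hV : IsRowIsometry V) {w w' : List ι}
    (hlen : w.length = w'.length) {x : E} (hx : x ≠ 0) (h : wordOp V w x = wordOp V w' x) :
    w = w' := by
  by_contra hne
  have horth : ⟪wordOp V w x, wordOp V w' x⟫ = 0 := by
    rw [inner_apply_eq_inner_star_apply, ← mul_apply_eq_comp,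
      hV.star_wordOp_mul_eq_zero_of_length_eq hlen hne]
    simp
  rw [← h, inner_self_eq_zero, ← norm_eq_zero, hV.norm_wordOp_apply] at horth
  exact hx (norm_eq_zero.mp horth)

end IsRowIsometry

end RowIsometry

namespace TwoGraphRep

variable {m n : ℕ} {θ : Equiv.Perm (Fin m × Fin n)} {H : Type*}
  [NormedAddCommGroup H] [InnerProductSpace ℂ H] [CompleteSpace H]
  (ρ : TwoGraphRep m n θ H)

theorem isRowIsometry_S : IsRowIsometry ρ.S := ρ.isometS

theorem isRowIsometry_T : IsRowIsometry ρ.T := ρ.isometT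

theorem exists_wordOp_T_mul_wordOp_S (v : List (Fin n)) (u : List (Fin m)) :
    ∃ u' v', u'.length = u.length ∧ v'.length = v.length ∧
      wordOp ρ.T v * wordOp ρ.S u = wordOp ρ.S u' * wordOp ρ.T v' :=
  exists_prod_map_mul_prod_map_eq ρ.S ρ.T
    (fun i j => ⟨(θ.symm (i, j)).1, (θ.symm (i, j)).2, by rw [ρ.comm]; simp⟩) u v

theorem exists_wordOp_S_mul_wordOp_T (u : List (Fin m)) (v : List (Fin n)) :
    ∃ v' u', v'.length = v.length ∧ u'.length = u.length ∧
      wordOp ρ.S u * wordOp ρ.T v = wordOp ρ.T v' * wordOp ρ.S u' :=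
  exists_prod_map_mul_prod_map_eq ρ.T ρ.S (fun j i => ⟨_, _, ρ.comm i j⟩) v u

variable {ρ} {k l : ℕ} {ζ : H}

theorem isWanderingKL_of_inner_eq_zero (hζ : ‖ζ‖ = 1)
    (h : ∀ (p p' : ℕ) (u u' : List (Fin m)) (v v' : List (Fin n)),
      u.length = p * k → v.length = p * l → u'.length = p' * k → v'.length = p' * l →
      ¬(u = u' ∧ v = v') →
      ⟪(wordOp ρ.S u * wordOp ρ.T v) ζ, (wordOp ρ.S u' * wordOp ρ.T v') ζ⟫ = 0) :
    ρ.IsWanderingKL k l ζ := by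
  refine ⟨hζ, fun p p' u u' v v' hu hv hu' hv' => ?_⟩
  split_ifs with heq
  · obtain ⟨rfl, rfl⟩ := heq
    rw [inner_self_eq_norm_sq_to_K, mul_apply_eq_comp, ρ.isRowIsometry_S.norm_wordOp_apply,
      ρ.isRowIsometry_T.norm_wordOp_apply, hζ]
    simp
  · exact h p p' u u' v v' hu hv hu' hv' heq

namespace IsWanderingKL

theorem inner_wordOp_eq_zero (hk : 0 < k) (hζ : ρ.IsWanderingKL k l ζ) {d : ℕ} (hd : 0 < d)
    {u : List (Fin m)} {v : List (Fin n)} (hu : u.length = d * k) (hv : v.length = d * l) :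
    ⟪ζ, wordOp ρ.S u (wordOp ρ.T v ζ)⟫ = 0 := by
  have hne : [] ≠ u := by
    rintro rfl
    exact absurd hu (Nat.mul_pos hd hk).ne
  simpa [hne] using hζ.2 0 d [] u [] v (by simp) (by simp) hu hv

theorem inner_wordOp_T_wordOp_S_T_eq_zero (hk : 0 < k) (hζ : ρ.IsWanderingKL k l ζ) {d : ℕ}
    (hd : 0 < d) {w : List (Fin m)} {b b' : List (Fin n)} (hw : w.length = d * k)
    (hb' : b'.length = b.length + d * l) :
    ⟪wordOp ρ.T b ζ, wordOp ρ.S w (wordOp ρ.T b' ζ)⟫ = 0 := by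
  obtain ⟨c, w', hc, hw', hcomm⟩ := ρ.exists_wordOp_S_mul_wordOp_T w b'
  rw [← mul_apply_eq_comp, hcomm, mul_apply_eq_comp, inner_apply_eq_inner_star_apply,
    ← mul_apply_eq_comp]
  by_cases hpre : b <+: c
  · obtain ⟨y, rfl⟩ := hpre
    obtain ⟨e, f, he, hf, hcomm'⟩ := ρ.exists_wordOp_T_mul_wordOp_S y w'
    rw [ρ.isRowIsometry_T.star_wordOp_mul_append, ← mul_apply_eq_comp, hcomm',
      mul_apply_eq_comp]
    rw [List.length_append] at hc
    exact hζ.inner_wordOp_eq_zero hk hd (by omega) (by omega)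
  · rw [ρ.isRowIsometry_T.star_wordOp_mul_eq_zero (by omega) hpre]
    simp

theorem inner_eq_zero_of_le (hk : 0 < k) (hζ : ρ.IsWanderingKL k l ζ) {r s p p' : ℕ}
    (hp : p ≤ p') {a a' : List (Fin m)} {b b' : List (Fin n)}
    (ha : a.length = p * k + r) (hb : b.length = p * l + s)
    (ha' : a'.length = p' * k + r) (hb' : b'.length = p' * l + s) (hne : ¬(a = a' ∧ b = b')) :
    ⟪wordOp ρ.S a (wordOp ρ.T b ζ), wordOp ρ.S a' (wordOp ρ.T b' ζ)⟫ = 0 := by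
  rw [inner_apply_eq_inner_star_apply, ← mul_apply_eq_comp]
  obtain rfl | hlt := hp.eq_or_lt
  · by_cases haa : a = a'
    · subst haa
      rw [ρ.isRowIsometry_S.star_wordOp_mul_self, one_apply_eq_self,
        inner_apply_eq_inner_star_apply, ← mul_apply_eq_comp,
        ρ.isRowIsometry_T.star_wordOp_mul_eq_zero_of_length_eq (by omega)
          fun h => hne ⟨rfl, h⟩]
      simp
    · rw [ρ.isRowIsometry_S.star_wordOp_mul_eq_zero_of_length_eq (by omega) haa]
      simp
  · have hk' : p * k < p' * k := Nat.mul_lt_mul_of_pos_right hlt hk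
    by_cases hpre : a <+: a'
    · obtain ⟨w, rfl⟩ := hpre
      rw [ρ.isRowIsometry_S.star_wordOp_mul_append]
      have hk'' : (p' - p) * k = p' * k - p * k := Nat.sub_mul p' p k
      have hl' : (p' - p) * l = p' * l - p * l := Nat.sub_mul p' p l
      have hl'' : p * l ≤ p' * l := Nat.mul_le_mul_right l hlt.le
      rw [List.length_append] at ha'
      exact hζ.inner_wordOp_T_wordOp_S_T_eq_zero hk (Nat.sub_pos_of_lt hlt) (by omega) (by omega)
    · rw [ρ.isRowIsometry_S.star_wordOp_mul_eq_zero (by omega) hpre]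
      simp

theorem inner_eq_zero (hk : 0 < k) (hζ : ρ.IsWanderingKL k l ζ) {r s p p' : ℕ}
    {a a' : List (Fin m)} {b b' : List (Fin n)}
    (ha : a.length = p * k + r) (hb : b.length = p * l + s)
    (ha' : a'.length = p' * k + r) (hb' : b'.length = p' * l + s) (hne : ¬(a = a' ∧ b = b')) :
    ⟪wordOp ρ.S a (wordOp ρ.T b ζ), wordOp ρ.S a' (wordOp ρ.T b' ζ)⟫ = 0 := by
  obtain hp | hp := le_total p p'
  · exact hζ.inner_eq_zero_of_le hk hp ha hb ha' hb' hne
  · refine inner_eq_zero_symm.mp (hζ.inner_eq_zero_of_le hk hp ha' hb' ha hb ?_)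
    rintro ⟨rfl, rfl⟩
    exact hne ⟨rfl, rfl⟩

theorem T_apply (hk : 0 < k) (hζ : ρ.IsWanderingKL k l ζ) (j : Fin n) :
    ρ.IsWanderingKL k l (ρ.T j ζ) := by
  refine isWanderingKL_of_inner_eq_zero ((ρ.isRowIsometry_T.norm_apply j ζ).trans hζ.1)
    fun p p' u u' v v' hu hv hu' hv' hne => ?_
  have happend (v : List (Fin n)) : wordOp ρ.T v (ρ.T j ζ) = wordOp ρ.T (v ++ [j]) ζ := by
    simp
  rw [mul_apply_eq_comp, mul_apply_eq_comp, happend, happend]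
  refine hζ.inner_eq_zero hk (r := 0) (s := 1) (p := p) (p' := p') (by simpa using hu)
    (by simpa using hv) (by simpa using hu') (by simpa using hv') ?_
  rintro ⟨rfl, hvv⟩
  exact hne ⟨rfl, List.append_cancel_right hvv⟩

theorem S_apply (hk : 0 < k) (hζ : ρ.IsWanderingKL k l ζ) (i : Fin m) :
    ρ.IsWanderingKL k l (ρ.S i ζ) := by
  have hSζ : ‖ρ.S i ζ‖ = 1 := (ρ.isRowIsometry_S.norm_apply i ζ).trans hζ.1
  refine isWanderingKL_of_inner_eq_zero hSζ fun p p' u u' v v' hu hv hu' hv' hne => ?_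
  obtain ⟨c, e, hc, he, hce⟩ := ρ.exists_wordOp_T_mul_wordOp_S v [i]
  obtain ⟨c', e', hc', he', hce'⟩ := ρ.exists_wordOp_T_mul_wordOp_S v' [i]
  have hpull {v c e} (h : wordOp ρ.T v * wordOp ρ.S [i] = wordOp ρ.S c * wordOp ρ.T e)
      (u : List (Fin m)) :
      (wordOp ρ.S u * wordOp ρ.T v) (ρ.S i ζ) = wordOp ρ.S (u ++ c) (wordOp ρ.T e ζ) := by
    simpa [mul_assoc] using congrArg (fun A => (wordOp ρ.S u * A) ζ) h
  rw [hpull hce, hpull hce']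
  refine hζ.inner_eq_zero hk (r := 1) (s := 0) (p := p) (p' := p') (by simp [hu, hc])
    (by simp [he, hv]) (by simp [hu', hc']) (by simp [he', hv']) ?_
  rintro ⟨huc, rfl⟩
  have hlen : u.length = u'.length := by
    simpa [hc, hc'] using congrArg List.length huc
  obtain ⟨rfl, rfl⟩ := List.append_inj huc hlen
  have hSζ0 : ρ.S i ζ ≠ 0 := norm_ne_zero_iff.mp (by rw [hSζ]; exact one_ne_zero)
  refine hne ⟨rfl, ρ.isRowIsometry_T.eq_of_wordOp_apply_eq (he.symm.trans he') hSζ0 ?_⟩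
  simpa using congrArg (fun A => A ζ) (hce.trans hce'.symm)

end IsWanderingKL

end TwoGraphRep

theorem statement17_general {m n : ℕ}
    {θ : Equiv.Perm (Fin m × Fin n)} {H : Type*}
    [NormedAddCommGroup H] [InnerProductSpace ℂ H] [CompleteSpace H]
    (ρ : TwoGraphRep m n θ H) (k l : ℕ) (hk : 0 < k)
    (ζ : H) (hζ : ρ.IsWanderingKL k l ζ) :
    (∀ i, ρ.IsWanderingKL k l (ρ.S i ζ)) ∧ (∀ j, ρ.IsWanderingKL k l (ρ.T j ζ)) :=
  ⟨hζ.S_apply hk, hζ.T_apply hk⟩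

/-- Wandering vectors for `[S_u T_v : |u|=k, |v|=l]` propagate under the generators. -/
theorem statement17 {m n : ℕ} (hm : 0 < m) (hn : 0 < n) (hmn : 2 ≤ m ∨ 2 ≤ n)
    {θ : Equiv.Perm (Fin m × Fin n)} {H : Type*}
    [NormedAddCommGroup H] [InnerProductSpace ℂ H] [CompleteSpace H]
    (ρ : TwoGraphRep m n θ H) (k l : ℕ) (hk : 0 < k) (hl : 0 < l)
    (ζ : H) (hζ : ρ.IsWanderingKL k l ζ) :
    (∀ i, ρ.IsWanderingKL k l (ρ.S i ζ)) ∧ (∀ j, ρ.IsWanderingKL k l (ρ.T j ζ)) :=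
  statement17_general ρ k l hk ζ hζ
end
end

section
/- Let (S,T) be a Cuntz-type atomic representation of F_θ^+ on H with standard basis {ξ_t}. Then for every standard basis vector ξ and every pair of nonnegative integers (k,l), there exist a word u of length k over {1,…,m}, a word v of length l over {1,…,n}, and a standard basis vector η such that S_uT_vη ∈ 𝕋ξ; moreover the triple (u, v, η) with this property is unique. -/
noncomputable section

open scoped InnerProductSpace ComplexInnerProductSpace Classical

/-!
The operators `S_u T_v` with `|u| = k`, `|v| = l` again form a family of isometries with
pairwise orthogonal ranges summing to `I`, and each of them maps basis vectors into `𝕋`-multiples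
of basis vectors. For any such family `V` and basis vector `ξ_t`, expanding
`ξ_t = Σ_a V_a V_a* ξ_t` gives some `⟪V_a ξ_s, ξ_t⟫ ≠ 0`, i.e. `V_a ξ_s ∈ 𝕋ξ_t`. If also
`V_b ξ_s' ∈ 𝕋ξ_t`, then `⟪V_a ξ_s, V_b ξ_s'⟫ ≠ 0`, which forces `a = b` (orthogonal ranges) and
then `s = s'` (`V_a` is an isometry).
-/

section AtomicOperators

variable {H : Type*} [NormedAddCommGroup H] [InnerProductSpace ℂ H] {ι Λ : Type*}

lemma fnWordOp_zero (V : ι → H →L[ℂ] H) (u : Fin 0 → ι) : fnWordOp V u = 1 := by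
  simp [fnWordOp, wordOp]

lemma fnWordOp_cons {k : ℕ} (V : ι → H →L[ℂ] H) (a : ι) (u : Fin k → ι) :
    fnWordOp V (Fin.cons a u) = V a * fnWordOp V u := by
  simp [fnWordOp, wordOp, List.ofFn_succ]

lemma HilbertBasis.exists_inner_ne_zero (ξ : HilbertBasis Λ ℂ H) {x : H} (hx : x ≠ 0) :
    ∃ t, ⟪ξ t, x⟫ ≠ 0 := by
  by_contra! h
  refine hx (ξ.repr.map_eq_zero_iff.mp ?_)
  ext t
  rw [ξ.repr_apply_apply, h t]
  rfl

def IsAtomicFor (ξ : HilbertBasis Λ ℂ H) (A : H →L[ℂ] H) : Prop :=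
  ∀ t, ∃ (c : ℂ) (t' : Λ), ‖c‖ = 1 ∧ A (ξ t) = c • ξ t'

namespace IsAtomicFor

variable {ξ : HilbertBasis Λ ℂ H}

lemma one : IsAtomicFor ξ 1 := fun t => ⟨1, t, norm_one, (one_smul ℂ _).symm⟩

lemma mul {A B : H →L[ℂ] H} (hA : IsAtomicFor ξ A) (hB : IsAtomicFor ξ B) :
    IsAtomicFor ξ (A * B) := by
  intro t
  obtain ⟨c, s, hc, hBt⟩ := hB t
  obtain ⟨d, s', hd, hAs⟩ := hA s
  exact ⟨c * d, s', by rw [norm_mul, hc, hd, one_mul], by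
    rw [mul_apply_eq_comp, hBt, map_smul, hAs, smul_smul]⟩

lemma fnWordOp {V : ι → H →L[ℂ] H} (hV : ∀ a, IsAtomicFor ξ (V a)) :
    ∀ {k : ℕ} (u : Fin k → ι), IsAtomicFor ξ (_root_.fnWordOp V u)
  | 0, u => by rw [fnWordOp_zero]; exact one
  | _ + 1, u => by
    rw [← Fin.cons_self_tail u, fnWordOp_cons]
    exact (hV _).mul (fnWordOp hV _)

end IsAtomicFor

end AtomicOperators

section CuntzFamilies

variable {H : Type*} [NormedAddCommGroup H] [InnerProductSpace ℂ H] [CompleteSpace H]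
  {ι κ Λ : Type*}

structure IsCuntzFamily [Fintype ι] (V : ι → H →L[ℂ] H) : Prop where
  star_mul_self : ∀ a, star (V a) * V a = 1
  star_mul_of_ne : ∀ a b, a ≠ b → star (V a) * V b = 0
  sum_mul_star : ∑ a, V a * star (V a) = 1

namespace IsCuntzFamily

variable [Fintype ι] [Fintype κ] {V : ι → H →L[ℂ] H}

lemma of_star_mul_eq_ite [DecidableEq ι]
    (hiso : ∀ a b, star (V a) * V b = if a = b then 1 else 0)
    (hsum : ∑ a, V a * star (V a) = 1) : IsCuntzFamily V :=
  ⟨fun a => by simpa using hiso a a, fun a b hab => by simpa [hab] using hiso a b, hsum⟩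

lemma inner_apply_apply_of_ne (hV : IsCuntzFamily V) {a b : ι} (hab : a ≠ b) (x y : H) :
    ⟪V a x, V b y⟫ = 0 := by
  rw [← ContinuousLinearMap.adjoint_inner_right, ← ContinuousLinearMap.star_eq_adjoint,
    ← mul_apply_eq_comp, hV.star_mul_of_ne a b hab, zero_apply, inner_zero_right]

lemma inner_apply_apply_self (hV : IsCuntzFamily V) (a : ι) (x y : H) :
    ⟪V a x, V a y⟫ = ⟪x, y⟫ := by
  rw [← ContinuousLinearMap.adjoint_inner_right, ← ContinuousLinearMap.star_eq_adjoint,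
    ← mul_apply_eq_comp, hV.star_mul_self, one_apply_eq_self]

lemma comp_equiv (hV : IsCuntzFamily V) (e : κ ≃ ι) : IsCuntzFamily (fun b => V (e b)) :=
  ⟨fun b => hV.star_mul_self (e b), fun _ _ hab => hV.star_mul_of_ne _ _ (e.injective.ne hab),
    by rw [e.sum_comp (fun a => V a * star (V a)), hV.sum_mul_star]⟩

lemma mul (hV : IsCuntzFamily V) {U : κ → H →L[ℂ] H} (hU : IsCuntzFamily U) :
    IsCuntzFamily (fun p : ι × κ => V p.1 * U p.2) where
  star_mul_self p := by
    rw [star_mul, mul_assoc, ← mul_assoc (star (V p.1)), hV.star_mul_self, one_mul,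
      hU.star_mul_self]
  star_mul_of_ne p q hpq := by
    rw [star_mul, mul_assoc, ← mul_assoc (star (V p.1))]
    by_cases h₁ : p.1 = q.1
    · rw [h₁, hV.star_mul_self, one_mul, hU.star_mul_of_ne _ _ fun h₂ => hpq (Prod.ext h₁ h₂)]
    · rw [hV.star_mul_of_ne _ _ h₁, zero_mul, mul_zero]
  sum_mul_star := by
    calc ∑ p : ι × κ, V p.1 * U p.2 * star (V p.1 * U p.2)
        = ∑ a, V a * (∑ b, U b * star (U b)) * star (V a) := by
          simp only [Fintype.sum_prod_type, star_mul, Finset.mul_sum, Finset.sum_mul, mul_assoc]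
      _ = 1 := by simp only [hU.sum_mul_star, mul_one, hV.sum_mul_star]

lemma fnWordOp (hV : IsCuntzFamily V) :
    ∀ k : ℕ, IsCuntzFamily (fun u : Fin k → ι => fnWordOp V u)
  | 0 => by
    refine ⟨fun u => ?_, fun u v huv => (huv (Subsingleton.elim u v)).elim, ?_⟩ <;>
      simp [fnWordOp_zero]
  | k + 1 => by
    have hcons : (fun u : Fin (k + 1) → ι => _root_.fnWordOp V u) =
        fun u => V ((Fin.consEquiv fun _ => ι).symm u).1 *
          _root_.fnWordOp V ((Fin.consEquiv fun _ => ι).symm u).2 := by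
      funext u
      conv_lhs => rw [← Fin.cons_self_tail u]
      exact fnWordOp_cons V _ _
    rw [hcons]
    exact (hV.mul (hV.fnWordOp k)).comp_equiv _

variable (ξ : HilbertBasis Λ ℂ H)

lemma exists_apply_basis_eq_smul (hV : IsCuntzFamily V) (hA : ∀ a, IsAtomicFor ξ (V a))
    (t : Λ) : ∃ (a : ι) (s : Λ) (c : ℂ), ‖c‖ = 1 ∧ V a (ξ s) = c • ξ t := by
  obtain ⟨a, ha⟩ : ∃ a, star (V a) (ξ t) ≠ 0 := by
    by_contra! h
    refine ξ.orthonormal.ne_zero t ?_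
    rw [← one_apply_eq_self (F := H →L[ℂ] H) (ξ t), ← hV.sum_mul_star, sum_apply]
    simp [mul_apply_eq_comp, h]
  obtain ⟨s, hs⟩ := ξ.exists_inner_ne_zero ha
  rw [ContinuousLinearMap.star_eq_adjoint, ContinuousLinearMap.adjoint_inner_right] at hs
  obtain ⟨c, t', hc, hVs⟩ := hA a s
  obtain rfl : t' = t := by
    by_contra hne
    rw [hVs, inner_smul_left, ξ.orthonormal.inner_eq_zero hne, mul_zero] at hs
    exact hs rfl
  exact ⟨a, s, c, hc, hVs⟩

lemma eq_of_apply_basis_eq_smul (hV : IsCuntzFamily V) {a b : ι} {s s' t : Λ} {c c' : ℂ}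
    (hc : c ≠ 0) (hc' : c' ≠ 0) (ha : V a (ξ s) = c • ξ t) (hb : V b (ξ s') = c' • ξ t) :
    a = b ∧ s = s' := by
  have hinner : ⟪V a (ξ s), V b (ξ s')⟫ ≠ 0 := by
    rw [ha, hb, inner_smul_left, inner_smul_right,
      inner_self_eq_one_of_norm_eq_one (ξ.orthonormal.1 t)]
    simp [hc, hc']
  obtain rfl : a = b := by
    by_contra hab
    exact hinner (hV.inner_apply_apply_of_ne hab _ _)
  refine ⟨rfl, ?_⟩
  by_contra hss
  rw [hV.inner_apply_apply_self, ξ.orthonormal.inner_eq_zero hss] at hinner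
  exact hinner rfl

lemma existsUnique_apply_basis_eq_smul (hV : IsCuntzFamily V) (hA : ∀ a, IsAtomicFor ξ (V a))
    (t : Λ) : ∃! p : ι × Λ, ∃ c : ℂ, ‖c‖ = 1 ∧ V p.1 (ξ p.2) = c • ξ t := by
  obtain ⟨a, s, c, hc, hVs⟩ := hV.exists_apply_basis_eq_smul ξ hA t
  refine ⟨(a, s), ⟨c, hc, hVs⟩, fun p ⟨c', hc', hVp⟩ => ?_⟩
  obtain ⟨rfl, rfl⟩ := hV.eq_of_apply_basis_eq_smul ξ (norm_ne_zero_iff.mp <| by simp [hc'])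
    (norm_ne_zero_iff.mp <| by simp [hc]) hVp hVs
  rfl

end IsCuntzFamily

end CuntzFamilies

theorem statement18_general {m n : ℕ}
    {θ : Equiv.Perm (Fin m × Fin n)} {H : Type*}
    [NormedAddCommGroup H] [InnerProductSpace ℂ H] [CompleteSpace H]
    (ρ : TwoGraphRep m n θ H) (hCuntz : ρ.CuntzType)
    {Λ : Type*} (ξ : HilbertBasis Λ ℂ H) (hAtomic : ρ.AtomicBasis ξ) :
    ∀ (t : Λ) (k l : ℕ), ∃! w : (Fin k → Fin m) × (Fin l → Fin n) × Λ,
      ∃ c : ℂ, ‖c‖ = 1 ∧ (fnWordOp ρ.S w.1 * fnWordOp ρ.T w.2.1) (ξ w.2.2) = c • ξ t := by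
  intro t k l
  have hS : IsCuntzFamily ρ.S := .of_star_mul_eq_ite ρ.isometS hCuntz.1
  have hT : IsCuntzFamily ρ.T := .of_star_mul_eq_ite ρ.isometT hCuntz.2
  have hrow := (hS.fnWordOp k).mul (hT.fnWordOp l)
  have hrowAtomic : ∀ p : (Fin k → Fin m) × (Fin l → Fin n),
      IsAtomicFor ξ (fnWordOp ρ.S p.1 * fnWordOp ρ.T p.2) := fun p =>
    (IsAtomicFor.fnWordOp hAtomic.1 p.1).mul (IsAtomicFor.fnWordOp hAtomic.2 p.2)
  exact (Equiv.prodAssoc _ _ _).existsUnique_congr_left.mp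
    (hrow.existsUnique_apply_basis_eq_smul ξ hrowAtomic t)

/-- In a Cuntz-type atomic representation, each basis vector has a unique incoming path of
each degree `(k, l)`. -/
theorem statement18 {m n : ℕ} (hm : 0 < m) (hn : 0 < n) (hmn : 2 ≤ m ∨ 2 ≤ n)
    {θ : Equiv.Perm (Fin m × Fin n)} {H : Type*}
    [NormedAddCommGroup H] [InnerProductSpace ℂ H] [CompleteSpace H]
    (ρ : TwoGraphRep m n θ H) (hCuntz : ρ.CuntzType)
    {Λ : Type*} (ξ : HilbertBasis Λ ℂ H) (hAtomic : ρ.AtomicBasis ξ) :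
    ∀ (t : Λ) (k l : ℕ), ∃! w : (Fin k → Fin m) × (Fin l → Fin n) × Λ,
      ∃ c : ℂ, ‖c‖ = 1 ∧ (fnWordOp ρ.S w.1 * fnWordOp ρ.T w.2.1) (ξ w.2.2) = c • ξ t :=
  statement18_general ρ hCuntz ξ hAtomic
end
end

section
/- Let (S,T) be an atomic isometric representation of F_θ^+ on H with standard basis {ξ_t}, and let η be a standard basis vector. Then η is a wandering vector for (S,T) if and only if none of the following four conditions holds: (W1) S_uη ∈ 𝕋η for some nonempty word u over {1,…,m}; (W2) T_vη ∈ 𝕋η for some nonempty word v over {1,…,n}; (W3) T_vS_uη ∈ 𝕋η for some nonempty words u, v; (W4) S_uη ∈ 𝕋T_vη for some nonempty words u, v. -/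
noncomputable section

open scoped InnerProductSpace ComplexInnerProductSpace Classical

/-! Every orbit vector `S_u T_v ξ_t` of a standard basis vector is a unimodular multiple of a
basis vector, so two of them are either orthogonal or on the same ray. If
`S_u T_v η ∈ 𝕋 S_u' T_v' η` with `(u, v) ≠ (u', v')`, cancel the common prefix of `u` and `u'`
(the `S_i` are isometries with orthogonal ranges), commute what is left, `S_w T_v`, into
`T_y S_x` with `|x| = |w|`, and cancel the common prefix of `y` and `v'`: the remainder is one
of (W1)-(W4). Conversely, each of (W1)-(W4) exhibits two distinct orbit vectors that are not
orthogonal. -/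

section Commutation

variable {M α β : Type*} [Monoid M] {f : α → M} {g : β → M}

theorem exists_swap_mul_prod_map (h : ∀ a b, ∃ b' a', f a * g b = g b' * f a') (a : α) :
    ∀ v : List β, ∃ (v' : List β) (a' : α),
      v'.length = v.length ∧ f a * (v.map g).prod = (v'.map g).prod * f a'
  | [] => ⟨[], a, rfl, by simp⟩
  | b :: v => by
    obtain ⟨b', a₁, hab⟩ := h a b
    obtain ⟨v', a', hlen, hv⟩ := exists_swap_mul_prod_map h a₁ v
    refine ⟨b' :: v', a', by simp [hlen], ?_⟩
    simp only [List.map_cons, List.prod_cons, ← mul_assoc, hab]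
    rw [mul_assoc, hv, mul_assoc]

theorem exists_swap_prod_map_mul_prod_map (h : ∀ a b, ∃ b' a', f a * g b = g b' * f a') :
    ∀ (u : List α) (v : List β), ∃ (v' : List β) (u' : List α),
      v'.length = v.length ∧ u'.length = u.length ∧
        (u.map f).prod * (v.map g).prod = (v'.map g).prod * (u'.map f).prod
  | [], v => ⟨v, [], rfl, rfl, by simp⟩
  | a :: u, v => by
    obtain ⟨v₁, u₁, hv₁len, hu₁len, hv₁⟩ := exists_swap_prod_map_mul_prod_map h u v
    obtain ⟨v', a', hlen, hv⟩ := exists_swap_mul_prod_map h a v₁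
    refine ⟨v', a' :: u₁, by rw [hlen, hv₁len], by simp [hu₁len], ?_⟩
    simp only [List.map_cons, List.prod_cons, mul_assoc, hv₁]
    rw [← mul_assoc, hv, mul_assoc]

end Commutation

section RowIsometry

variable {E : Type*} [NormedAddCommGroup E] [InnerProductSpace ℂ E] [CompleteSpace E]
  {ι : Type*} [DecidableEq ι] {V : ι → E →L[ℂ] E}

omit [CompleteSpace E] [DecidableEq ι] in
theorem wordOp_cons_apply (i : ι) (w : List ι) (x : E) :
    wordOp V (i :: w) x = V i (wordOp V w x) := by
  simp [wordOp]

omit [CompleteSpace E] [DecidableEq ι] in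
theorem mapsTo_wordOp {s : Set E} (h : ∀ i, Set.MapsTo (V i) s s) :
    ∀ w : List ι, Set.MapsTo (wordOp V w) s s
  | [] => Set.mapsTo_id s
  | i :: w => fun x hx => by
    rw [wordOp_cons_apply]
    exact h i (mapsTo_wordOp h w hx)

variable (hV : ∀ i i', star (V i) * V i' = if i = i' then 1 else 0)
include hV

theorem star_apply_apply (i i' : ι) (x : E) :
    star (V i) (V i' x) = if i = i' then x else 0 := by
  rw [← mul_apply_eq_comp, hV]
  split_ifs <;> rfl

theorem wordOp_apply_ne_zero {x : E} (hx : x ≠ 0) : ∀ w : List ι, wordOp V w x ≠ 0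
  | [] => hx
  | i :: w => by
    intro h
    have h' := congrArg (fun z => star (V i) z) h
    simp only [wordOp_cons_apply, star_apply_apply hV, ↓reduceIte, map_zero] at h'
    exact wordOp_apply_ne_zero hx w h'

theorem exists_append_of_wordOp_apply_eq {x y : E} (hx : x ≠ 0) :
    ∀ {u u' : List ι}, wordOp V u x = wordOp V u' y →
      ∃ w, (u = u' ++ w ∧ wordOp V w x = y) ∨ (u' = u ++ w ∧ x = wordOp V w y)
  | [], u', h => ⟨u', Or.inr ⟨rfl, h⟩⟩
  | u, [], h => ⟨u, Or.inl ⟨rfl, h⟩⟩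
  | i :: u, i' :: u', h => by
    have h' := congrArg (fun z => star (V i) z) h
    simp only [wordOp_cons_apply, star_apply_apply hV, ↓reduceIte] at h'
    split_ifs at h' with hi
    · subst hi
      obtain ⟨w, hw⟩ := exists_append_of_wordOp_apply_eq hx h'
      exact ⟨w, by simpa using hw⟩
    · exact absurd h' (wordOp_apply_ne_zero hV hx u)

theorem eq_or_exists_wordOp_apply_eq_smul_self {x : E} (hx : x ≠ 0) {v v' : List ι}
    {c : ℂ} (hc : ‖c‖ = 1) (h : wordOp V v x = c • wordOp V v' x) :
    v = v' ∨ ∃ z, z ≠ [] ∧ ∃ c : ℂ, ‖c‖ = 1 ∧ wordOp V z x = c • x := by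
  have hc₀ : c ≠ 0 := ne_zero_of_norm_ne_zero (by simp [hc])
  rw [← map_smul] at h
  obtain ⟨z, ⟨rfl, hz⟩ | ⟨rfl, hz⟩⟩ := exists_append_of_wordOp_apply_eq hV hx h
  all_goals
    rcases eq_or_ne z [] with rfl | hz₀
    · exact Or.inl (by simp)
  · exact Or.inr ⟨z, hz₀, c, hc, hz⟩
  · refine Or.inr ⟨z, hz₀, c⁻¹, by rw [norm_inv, hc, inv_one], ?_⟩
    rw [map_smul] at hz
    exact (eq_inv_smul_iff₀ hc₀).mpr hz.symm

end RowIsometry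

namespace HilbertBasis

variable {E : Type*} [NormedAddCommGroup E] [InnerProductSpace ℂ E] {Λ : Type*}
  (ξ : HilbertBasis Λ ℂ E)

def unitMultiples : Set E := {x | ∃ c : ℂ, ‖c‖ = 1 ∧ ∃ t, x = c • ξ t}

theorem mem_unitMultiples (t : Λ) : ξ t ∈ ξ.unitMultiples :=
  ⟨1, norm_one, t, (one_smul ℂ _).symm⟩

theorem mapsTo_unitMultiples {A : E →L[ℂ] E}
    (hA : ∀ t, ∃ (c : ℂ) (t' : Λ), ‖c‖ = 1 ∧ A (ξ t) = c • ξ t') :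
    Set.MapsTo A ξ.unitMultiples ξ.unitMultiples := by
  rintro _ ⟨c, hc, t, rfl⟩
  obtain ⟨c', t', hc', hAt⟩ := hA t
  exact ⟨c * c', by rw [norm_mul, hc, hc', one_mul], t', by rw [map_smul, hAt, smul_smul]⟩

variable {ξ}

theorem norm_eq_one_of_mem_unitMultiples {x : E} (hx : x ∈ ξ.unitMultiples) : ‖x‖ = 1 := by
  obtain ⟨c, hc, t, rfl⟩ := hx
  rw [norm_smul, hc, ξ.orthonormal.1 t, one_mul]

theorem inner_eq_zero_or_exists_eq_smul_of_mem_unitMultiples {x y : E}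
    (hx : x ∈ ξ.unitMultiples) (hy : y ∈ ξ.unitMultiples) :
    ⟪x, y⟫ = 0 ∨ ∃ c : ℂ, ‖c‖ = 1 ∧ x = c • y := by
  obtain ⟨a, ha, s, rfl⟩ := hx
  obtain ⟨b, hb, s', rfl⟩ := hy
  by_cases hs : s = s'
  · subst hs
    have hb₀ : b ≠ 0 := ne_zero_of_norm_ne_zero (by simp [hb])
    refine Or.inr ⟨a * b⁻¹, by rw [norm_mul, norm_inv, ha, hb, one_mul, inv_one], ?_⟩
    rw [smul_smul, inv_mul_cancel_right₀ hb₀]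
  · left
    rw [inner_smul_left, inner_smul_right, ξ.orthonormal.2 hs, mul_zero, mul_zero]

end HilbertBasis

namespace TwoGraphRep

variable {m n : ℕ} {θ : Equiv.Perm (Fin m × Fin n)} {H : Type*}
  [NormedAddCommGroup H] [InnerProductSpace ℂ H] [CompleteSpace H] (ρ : TwoGraphRep m n θ H)

theorem exists_wordOp_S_mul_wordOp_T_eq (u : List (Fin m)) (v : List (Fin n)) :
    ∃ (v' : List (Fin n)) (u' : List (Fin m)), v'.length = v.length ∧ u'.length = u.length ∧
      wordOp ρ.S u * wordOp ρ.T v = wordOp ρ.T v' * wordOp ρ.S u' :=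
  exists_swap_prod_map_mul_prod_map (fun i j => ⟨_, _, ρ.comm i j⟩) u v

theorem exists_wordOp_T_mul_wordOp_S_eq (v : List (Fin n)) (u : List (Fin m)) :
    ∃ (u' : List (Fin m)) (v' : List (Fin n)), u'.length = u.length ∧ v'.length = v.length ∧
      wordOp ρ.T v * wordOp ρ.S u = wordOp ρ.S u' * wordOp ρ.T v' := by
  refine exists_swap_prod_map_mul_prod_map (fun j i => ?_) v u
  refine ⟨(θ.symm (i, j)).1, (θ.symm (i, j)).2, ?_⟩
  simpa using (ρ.comm (θ.symm (i, j)).1 (θ.symm (i, j)).2).symm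

/-- Condition (W4). -/
def HasBicolouredRing (x : H) : Prop :=
  ∃ (u : List (Fin m)) (v : List (Fin n)), u ≠ [] ∧ v ≠ [] ∧
    ∃ c : ℂ, ‖c‖ = 1 ∧ wordOp ρ.S u x = c • wordOp ρ.T v x

def HasRing (x : H) : Prop :=
  ρ.HasBlueRing x ∨ ρ.HasRedRing x ∨ ρ.HasMixedRing x ∨ ρ.HasBicolouredRing x

variable {ρ}

theorem hasRing_of_T_S_apply_eq_smul {x : H} {u : List (Fin m)} (hu : u ≠ [])
    (v : List (Fin n)) {c : ℂ} (hc : ‖c‖ = 1)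
    (h : wordOp ρ.T v (wordOp ρ.S u x) = c • x) : ρ.HasRing x := by
  rcases eq_or_ne v [] with rfl | hv
  · exact Or.inl ⟨u, hu, c, hc, h⟩
  · exact Or.inr (Or.inr (Or.inl ⟨u, v, hu, hv, c, hc, h⟩))

theorem hasRing_of_S_apply_eq_smul_T {x : H} {u : List (Fin m)} (hu : u ≠ [])
    (v : List (Fin n)) {c : ℂ} (hc : ‖c‖ = 1) (h : wordOp ρ.S u x = c • wordOp ρ.T v x) :
    ρ.HasRing x := by
  rcases eq_or_ne v [] with rfl | hv
  · exact Or.inl ⟨u, hu, c, hc, h⟩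
  · exact Or.inr (Or.inr (Or.inr ⟨u, v, hu, hv, c, hc, h⟩))

theorem eq_or_hasRing_of_S_T_apply_eq_smul_T {x : H} (hx : x ≠ 0) {w : List (Fin m)}
    {v v' : List (Fin n)} {c : ℂ} (hc : ‖c‖ = 1)
    (h : wordOp ρ.S w (wordOp ρ.T v x) = c • wordOp ρ.T v' x) :
    (w = [] ∧ v = v') ∨ ρ.HasRing x := by
  rcases eq_or_ne w [] with rfl | hw
  · rcases eq_or_exists_wordOp_apply_eq_smul_self ρ.isometT hx hc h with hv | hring
    · exact Or.inl ⟨rfl, hv⟩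
    · exact Or.inr (Or.inr (Or.inl hring))
  obtain ⟨y, u, -, hu, hswap⟩ := ρ.exists_wordOp_S_mul_wordOp_T_eq w v
  have hu₀ : u ≠ [] := by
    rintro rfl
    exact hw (List.length_eq_zero_iff.mp hu.symm)
  rw [← mul_apply_eq_comp, hswap, mul_apply_eq_comp, ← map_smul] at h
  obtain ⟨z, ⟨-, hz⟩ | ⟨-, hz⟩⟩ :=
    exists_append_of_wordOp_apply_eq ρ.isometT (wordOp_apply_ne_zero ρ.isometS hx u) h
  · exact Or.inr (hasRing_of_T_S_apply_eq_smul hu₀ z hc hz)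
  · rw [map_smul] at hz
    exact Or.inr (hasRing_of_S_apply_eq_smul_T hu₀ z hc hz)

theorem eq_or_hasRing_of_apply_eq_smul {x : H} (hx : x ≠ 0) {u u' : List (Fin m)}
    {v v' : List (Fin n)} {c : ℂ} (hc : ‖c‖ = 1)
    (h : wordOp ρ.S u (wordOp ρ.T v x) = c • wordOp ρ.S u' (wordOp ρ.T v' x)) :
    (u = u' ∧ v = v') ∨ ρ.HasRing x := by
  have hc₀ : c ≠ 0 := ne_zero_of_norm_ne_zero (by simp [hc])
  rw [← map_smul] at h
  obtain ⟨w, ⟨rfl, hw⟩ | ⟨rfl, hw⟩⟩ :=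
    exists_append_of_wordOp_apply_eq ρ.isometS (wordOp_apply_ne_zero ρ.isometT hx v) h
  · refine (eq_or_hasRing_of_S_T_apply_eq_smul_T hx hc hw).imp_left ?_
    rintro ⟨rfl, rfl⟩
    simp
  · rw [map_smul] at hw
    have hc' : ‖c⁻¹‖ = 1 := by rw [norm_inv, hc, inv_one]
    have hw' := (eq_inv_smul_iff₀ hc₀).mpr hw.symm
    refine (eq_or_hasRing_of_S_T_apply_eq_smul_T hx hc' hw').imp_left ?_
    rintro ⟨rfl, rfl⟩
    simp

theorem IsWanderingRep.apply_ne_smul {ζ : H} (hζ : ρ.IsWanderingRep ζ) {u u' : List (Fin m)}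
    {v v' : List (Fin n)} (huv : ¬(u = u' ∧ v = v')) {c : ℂ} (hc : c ≠ 0) :
    wordOp ρ.S u (wordOp ρ.T v ζ) ≠ c • wordOp ρ.S u' (wordOp ρ.T v' ζ) := by
  intro h
  have hne := hζ.2 u u' v v'
  have hself := hζ.2 u' u' v' v'
  rw [if_neg huv] at hne
  rw [if_pos ⟨rfl, rfl⟩] at hself
  simp only [mul_apply_eq_comp] at hne hself
  rw [h, inner_smul_left, hself, mul_one, map_eq_zero] at hne
  exact hc hne

theorem IsWanderingRep.not_hasRing {ζ : H} (hζ : ρ.IsWanderingRep ζ) : ¬ρ.HasRing ζ := by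
  rintro (⟨u, hu, c, hc, h⟩ | ⟨v, hv, c, hc, h⟩ | ⟨u, v, hu, hv, c, hc, h⟩ |
    ⟨u, v, hu, hv, c, hc, h⟩)
  all_goals have hc₀ : c ≠ 0 := ne_zero_of_norm_ne_zero (by simp [hc])
  · exact hζ.apply_ne_smul (u' := []) (v := []) (v' := []) (by simpa using hu) hc₀ h
  · exact hζ.apply_ne_smul (u := []) (u' := []) (v' := []) (by simpa using hv) hc₀ h
  · obtain ⟨u', v', hu', -, hswap⟩ := ρ.exists_wordOp_T_mul_wordOp_S_eq v u
    have hu'₀ : u' ≠ [] := by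
      rintro rfl
      exact hu (List.length_eq_zero_iff.mp hu'.symm)
    rw [← mul_apply_eq_comp, hswap, mul_apply_eq_comp] at h
    exact hζ.apply_ne_smul (u' := []) (v' := []) (by simp [hu'₀]) hc₀ h
  · exact hζ.apply_ne_smul (v := []) (u' := []) (by simp [hu]) hc₀ h

theorem isWanderingRep_of_not_hasRing {Λ : Type*} {ξ : HilbertBasis Λ ℂ H}
    (hA : ρ.AtomicBasis ξ) {t : Λ} (h : ¬ρ.HasRing (ξ t)) : ρ.IsWanderingRep (ξ t) := by
  have hmem (u : List (Fin m)) (v : List (Fin n)) :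
      wordOp ρ.S u (wordOp ρ.T v (ξ t)) ∈ ξ.unitMultiples :=
    mapsTo_wordOp (fun i => ξ.mapsTo_unitMultiples (hA.1 i)) u
      (mapsTo_wordOp (fun j => ξ.mapsTo_unitMultiples (hA.2 j)) v (ξ.mem_unitMultiples t))
  refine ⟨ξ.orthonormal.1 t, fun u u' v v' => ?_⟩
  simp only [mul_apply_eq_comp]
  split_ifs with huv
  · obtain ⟨rfl, rfl⟩ := huv
    rw [inner_self_eq_norm_sq_to_K, HilbertBasis.norm_eq_one_of_mem_unitMultiples (hmem u v)]
    simp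
  · refine (HilbertBasis.inner_eq_zero_or_exists_eq_smul_of_mem_unitMultiples
      (hmem u v) (hmem u' v')).resolve_right ?_
    rintro ⟨c, hc, hcuv⟩
    exact (eq_or_hasRing_of_apply_eq_smul (ξ.orthonormal.ne_zero t) hc hcuv).elim huv h

end TwoGraphRep

theorem statement19_general {m n : ℕ}
    {θ : Equiv.Perm (Fin m × Fin n)} {H : Type*}
    [NormedAddCommGroup H] [InnerProductSpace ℂ H] [CompleteSpace H]
    (ρ : TwoGraphRep m n θ H)
    {Λ : Type*} (ξ : HilbertBasis Λ ℂ H) (hAtomic : ρ.AtomicBasis ξ) (t : Λ) :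
    ρ.IsWanderingRep (ξ t) ↔
      ¬ (ρ.HasBlueRing (ξ t) ∨ ρ.HasRedRing (ξ t) ∨ ρ.HasMixedRing (ξ t) ∨
        ∃ (u : List (Fin m)) (v : List (Fin n)), u ≠ [] ∧ v ≠ [] ∧
          ∃ c : ℂ, ‖c‖ = 1 ∧ wordOp ρ.S u (ξ t) = c • wordOp ρ.T v (ξ t)) :=
  ⟨fun hw => hw.not_hasRing, ρ.isWanderingRep_of_not_hasRing hAtomic⟩

/-- A standard basis vector of an atomic representation is wandering iff it satisfies none of
the conditions (W1)-(W4). -/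
theorem statement19 {m n : ℕ} (hm : 0 < m) (hn : 0 < n) (hmn : 2 ≤ m ∨ 2 ≤ n)
    {θ : Equiv.Perm (Fin m × Fin n)} {H : Type*}
    [NormedAddCommGroup H] [InnerProductSpace ℂ H] [CompleteSpace H]
    (ρ : TwoGraphRep m n θ H)
    {Λ : Type*} (ξ : HilbertBasis Λ ℂ H) (hAtomic : ρ.AtomicBasis ξ) (t : Λ) :
    ρ.IsWanderingRep (ξ t) ↔
      ¬ (ρ.HasBlueRing (ξ t) ∨ ρ.HasRedRing (ξ t) ∨ ρ.HasMixedRing (ξ t) ∨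
        ∃ (u : List (Fin m)) (v : List (Fin n)), u ≠ [] ∧ v ≠ [] ∧
          ∃ c : ℂ, ‖c‖ = 1 ∧ wordOp ρ.S u (ξ t) = c • wordOp ρ.T v (ξ t)) :=
  statement19_general ρ ξ hAtomic t
end
end
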